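/- arXiv:1011.3648 — 6 statements merged into one kernel-verified Lean document; each statement's English description precedes it below -/
import Mathlib

section
/- Let q = 2^e with e ≥ 2 and let F_q be the finite field with q elements. The partial derivative with respect to x of the polynomial h(x,z) := z·∏_{α∈F_q}(x + α + α²z) ∈ F_q[x,z] is the polynomial z^q + z; that is, h_x(x,z) = z^q + z identically in F_q[x,z]. -/
/-!
The `x`-part `∏_α (x + φ α)` of `h`, with `φ α = α + α² z`, is the vanishing polynomial of the
image of the injective additive map `φ : F_q → F_q[z]` (additive because squaring is additive in
characteristic two). For the vanishing polynomial of a finite additive group the derivative takes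
the same value `∏_{δ ≠ 0} φ δ` at every node, since `β ↦ α - β` permutes the other nodes; having
degree below the number of nodes, the derivative is this constant. By Wilson's theorem
`∏_{δ ≠ 0} (δ + δ² z) = (∏ δ)² · ∏_{δ ≠ 0} (z + δ⁻¹) = z^(q-1) - 1`, and multiplying by `z` gives
`z^q - z = z^q + z`.
-/

open Polynomial Finset Lagrange

theorem Lagrange.derivative_nodal_univ_addMonoidHom {G R : Type*} [AddCommGroup G] [Fintype G]
    [DecidableEq G] [CommRing R] [IsDomain R] (φ : G →+ R) (hφ : Function.Injective φ) :
    derivative (nodal univ φ) = C (∏ g ∈ univ.erase 0, φ g) := by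
  have eval_node (a : G) :
      (derivative (nodal univ φ)).eval (φ a) = ∏ g ∈ univ.erase 0, φ g := by
    rw [eval_nodal_derivative_eval_node_eq (mem_univ a), eval_nodal]
    refine prod_nbij' (a - ·) (a - ·) ?_ ?_ ?_ ?_ ?_ <;> simp [sub_eq_zero, sub_eq_self, ne_comm]
  have natDegree_lt : (derivative (nodal univ φ)).natDegree < Fintype.card G := by
    have := natDegree_derivative_le (nodal univ φ)
    rw [natDegree_nodal, card_univ] at this
    have := Fintype.card_pos (α := G)
    omega
  rw [← sub_eq_zero]
  refine eq_zero_of_natDegree_lt_card_of_eval_eq_zero _ hφ (fun a => ?_) ?_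
  · rw [eval_sub, eval_C, eval_node, sub_self]
  · exact (natDegree_sub_le _ _).trans_lt (by rwa [natDegree_C, max_eq_left (Nat.zero_le _)])

theorem Finset.prod_univ_erase_zero_eq_prod_units {K M : Type*} [GroupWithZero K] [Fintype K]
    [DecidableEq K] [CommMonoid M] (f : K → M) : ∏ δ ∈ univ.erase 0, f δ = ∏ u : Kˣ, f u := by
  rw [prod_subtype _ (p := (· ≠ 0)) (by simp)]
  exact (Fintype.prod_equiv unitsEquivNeZero _ _ fun _ => rfl).symm

theorem FiniteField.prod_units_X_sub_C {K : Type*} [Field K] [Fintype K] [DecidableEq K] :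
    ∏ u : Kˣ, (X - C (u : K)) = X ^ (Fintype.card K - 1) - 1 := by
  classical
  simpa [nodal, Fintype.card_units] using nodal_subgroup_eq_X_pow_card_sub_one (R := K) ⊤

theorem FiniteField.prod_C_add_C_sq_mul_X {K : Type*} [Field K] [Fintype K] [DecidableEq K] :
    ∏ δ ∈ univ.erase (0 : K), (C δ + C (δ ^ 2) * X) = X ^ (Fintype.card K - 1) - 1 := by
  have factor (u : Kˣ) :
      C (u : K) + C ((u : K) ^ 2) * X = C ((u : K) ^ 2) * (X - C ((-u⁻¹ : Kˣ) : K)) := by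
    rw [Units.val_neg, Units.val_inv_eq_inv_val, mul_sub, ← C_mul]
    simp [sq, add_comm]
  rw [prod_univ_erase_zero_eq_prod_units, Fintype.prod_congr _ _ factor, prod_mul_distrib,
    ← map_prod, prod_pow, ← Units.coe_prod, FiniteField.prod_univ_units_id_eq_neg_one,
    Units.val_neg, Units.val_one, neg_one_sq, C_1, one_mul,
    Fintype.prod_equiv ((Equiv.inv Kˣ).trans (Equiv.neg Kˣ)) (fun u => X - C ((-u⁻¹ : Kˣ) : K))
      (fun u => X - C (u : K)) fun _ => rfl,
    FiniteField.prod_units_X_sub_C]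

theorem FiniteField.charP_two_of_card_eq_two_pow {F : Type*} [Field F] [Fintype F] {e : ℕ}
    (hF : Fintype.card F = 2 ^ e) : CharP F 2 := by
  have he : e ≠ 0 := by
    rintro rfl
    exact (Fintype.one_lt_card (α := F)).ne' hF
  have : ringChar F = 2 := by
    rw [FiniteField.even_card_iff_char_two, hF, Nat.pow_mod, Nat.mod_self, zero_pow he,
      Nat.zero_mod]
  exact this ▸ ringChar.charP F

noncomputable def Polynomial.addSqMulX (F : Type*) [CommRing F] [CharP F 2] : F →+ F[X] where
  toFun α := C α + C (α ^ 2) * X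
  map_zero' := by simp
  map_add' a b := by rw [CharTwo.add_sq, C_add, C_add]; ring

@[simp]
theorem Polynomial.addSqMulX_apply {F : Type*} [CommRing F] [CharP F 2] (α : F) :
    addSqMulX F α = C α + C (α ^ 2) * X :=
  rfl

theorem Polynomial.addSqMulX_injective (F : Type*) [CommRing F] [CharP F 2] :
    Function.Injective (addSqMulX F) := fun a b hab => by
  simpa using congr_arg (coeff · 0) hab

theorem h_deriv_x_eq_general (e : ℕ)
    (F : Type*) [Field F] [Fintype F] (hF : Fintype.card F = 2 ^ e)
    (h : Polynomial (Polynomial F))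
    (hdef : h = C X *
      ∏ α : F, (X + C (Polynomial.C α + Polynomial.C (α ^ 2) * X))) :
    derivative h = C (X ^ (2 ^ e) + X) := by
  classical
  have := FiniteField.charP_two_of_card_eq_two_pow hF
  have hnodal : ∏ α : F, (X + C (Polynomial.C α + Polynomial.C (α ^ 2) * X)) =
      nodal univ (addSqMulX F) := by
    simp only [nodal, addSqMulX_apply, CharTwo.sub_eq_add]
  have hderiv : derivative (nodal univ (addSqMulX F)) = C (X ^ (Fintype.card F - 1) - 1) := by
    rw [derivative_nodal_univ_addMonoidHom _ (addSqMulX_injective F)]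
    simp only [addSqMulX_apply, FiniteField.prod_C_add_C_sq_mul_X]
  rw [hdef, hnodal, derivative_C_mul, hderiv, ← C_mul, mul_sub, mul_one, ← pow_succ',
    Nat.sub_add_cancel Fintype.card_pos, hF, CharTwo.sub_eq_add]

/-- For `q = 2^e`, the partial derivative with respect to `x` of the polynomial
`h(x,z) = z·∏_{α ∈ F_q} (x + α + α²z)`, viewed as a polynomial in `x` over
`F_q[z]`, equals `z^q + z`. -/
theorem h_deriv_x_eq (e : ℕ) (he : 2 ≤ e)
    (F : Type*) [Field F] [Fintype F] (hF : Fintype.card F = 2 ^ e)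
    (h : Polynomial (Polynomial F))
    (hdef : h = C X *
      ∏ α : F, (X + C (Polynomial.C α + Polynomial.C (α ^ 2) * X))) :
    derivative h = C (X ^ (2 ^ e) + X) :=
  h_deriv_x_eq_general e F hF h hdef
end

section
/- Let q = 2^e with e ≥ 2, let F_q be the finite field with q elements, fix z₀ ∈ F_q with z₀ ≠ 0, and set h₀(x) := Σ_{i=0}^{e-1} z₀^{2^i} x^{2^i} ∈ F_q[x]. Then z₀·∏_{α∈F_q}(x + α + α²z₀) = h₀(x)² as polynomials in F_q[x]; in particular every element of S₀ = {α + α²z₀ : α ∈ F_q} is a root of the separable polynomial h₀, which has degree q/2. -/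
/-!
Let `g = X + z₀ X²`, so that `S₀` is the image of `g`. In characteristic 2 the Frobenius makes
`(Y + Y²)^(2^i) = Y^(2^i) + Y^(2^(i+1))` for `Y = z₀ X`, so `h₀ ∘ g` telescopes to
`z₀ (X^q - X)`. On the other side, `g + g(α) = z₀ (X - α)(X - α - z₀⁻¹)`, so composing the
product with `g` gives `z₀^q (X^q - X)²`. Hence both sides of the identity agree after
composition with the nonconstant `g`, and therefore agree. The roots of `h₀` come from
`h₀ ∘ g`, separability from `h₀' = z₀`, and the degree from the identity.
-/

open Polynomial

namespace CharTwo

variable {R : Type*} [CommRing R] [CharP R 2]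

theorem add_sq_pow_two_pow (a : R) (i : ℕ) :
    (a + a ^ 2) ^ 2 ^ i = a ^ 2 ^ (i + 1) - a ^ 2 ^ i := by
  rw [add_pow_char_pow, ← pow_mul, ← pow_succ', sub_eq_add, add_comm]

theorem sum_range_add_sq_pow_two_pow (a : R) (e : ℕ) :
    ∑ i ∈ Finset.range e, (a + a ^ 2) ^ 2 ^ i = a ^ 2 ^ e - a := by
  simp_rw [add_sq_pow_two_pow]
  rw [Finset.sum_range_sub (fun i => a ^ 2 ^ i) e, pow_zero, pow_one]

end CharTwo

namespace Polynomial

section CharTwo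

variable {R : Type*} [CommRing R] [CharP R 2]

theorem sum_C_pow_mul_X_pow_comp_X_add_C_mul_X_sq (z : R) (e : ℕ) :
    (∑ i ∈ Finset.range e, C (z ^ 2 ^ i) * X ^ 2 ^ i).comp (X + C z * X ^ 2) =
      C (z ^ 2 ^ e) * X ^ 2 ^ e - C z * X := by
  have hY : C z * (X + C z * X ^ 2) = C z * X + (C z * X) ^ 2 := by ring
  simp_rw [C_pow, ← mul_pow, sum_comp, pow_comp, mul_comp, C_comp, X_comp, hY,
    CharTwo.sum_range_add_sq_pow_two_pow]

theorem derivative_sum_C_pow_mul_X_pow (z : R) {e : ℕ} (he : e ≠ 0) :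
    derivative (∑ i ∈ Finset.range e, C (z ^ 2 ^ i) * X ^ 2 ^ i) = C z := by
  rw [derivative_sum, Finset.sum_eq_single_of_mem 0 (Finset.mem_range.mpr (by omega))]
  · simp
  · intro i _ hi
    have h2i : ((2 ^ i : ℕ) : R) = 0 := by
      rw [Nat.cast_pow, Nat.cast_ofNat, CharTwo.two_eq_zero, zero_pow hi]
    rw [derivative_C_mul, derivative_X_pow, h2i, C_0, zero_mul, mul_zero]

end CharTwo

theorem natDegree_X_add_C_mul_X_sq {R : Type*} [Semiring R] {z : R} (hz : z ≠ 0) :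
    (X + C z * X ^ 2).natDegree = 2 := by
  compute_degree!

theorem eq_of_comp_eq_comp {R : Type*} [CommRing R] [IsDomain R] {p q g : R[X]}
    (hg : g.natDegree ≠ 0) (h : p.comp g = q.comp g) : p = q := by
  rw [← sub_eq_zero, ← sub_comp, comp_eq_zero_iff] at h
  refine sub_eq_zero.mp (h.resolve_right fun ⟨_, hC⟩ => hg ?_)
  rw [hC, natDegree_C]

section Field

variable {K : Type*} [Field K]

theorem X_add_C_mul_X_sq_add_C_eq [CharP K 2] {z : K} (hz : z ≠ 0) (α : K) :
    X + C z * X ^ 2 + C (α + α ^ 2 * z) = C z * ((X - C α) * (X - C (α + z⁻¹))) := by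
  have hu : (C z : K[X]) * C z⁻¹ = 1 := by rw [← C_mul, mul_inv_cancel₀ hz, C_1]
  have h2 : (2 : K[X]) = 0 := CharTwo.two_eq_zero
  simp only [C_add, C_mul, C_pow]
  linear_combination (X - C α) * hu + (X + C z * C α * X) * h2

variable [Fintype K]

theorem _root_.FiniteField.prod_X_sub_C_eq_X_pow_card_sub_X :
    ∏ α : K, (X - C α) = X ^ Fintype.card K - X := by
  have h1 : 1 < Fintype.card K := Fintype.one_lt_card
  have hroots := FiniteField.roots_X_pow_card_sub_X K
  have hmonic : (X ^ Fintype.card K - X : K[X]).Monic := monic_X_pow_sub (by simpa using h1)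
  have := prod_multiset_X_sub_C_of_monic_of_roots_card_eq hmonic
    (by rw [hroots, FiniteField.X_pow_card_sub_X_natDegree_eq K h1]; rfl)
  rwa [hroots] at this

theorem prod_X_add_C_comp_X_add_C_mul_X_sq [CharP K 2] {z : K} (hz : z ≠ 0) :
    (∏ α : K, (X + C (α + α ^ 2 * z))).comp (X + C z * X ^ 2) =
      C z ^ Fintype.card K * (X ^ Fintype.card K - X) ^ 2 := by
  have hshift : ∏ α : K, (X - C (α + z⁻¹)) = ∏ α : K, (X - C α) :=
    Fintype.prod_equiv (Equiv.addRight z⁻¹) _ _ fun _ => rfl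
  simp_rw [prod_comp, add_comp, X_comp, C_comp, X_add_C_mul_X_sq_add_C_eq hz,
    Finset.prod_mul_distrib, Finset.prod_const, Finset.card_univ, hshift,
    FiniteField.prod_X_sub_C_eq_X_pow_card_sub_X]
  ring

end Field

end Polynomial

theorem prod_eq_h₀_sq_general (e : ℕ)
    (F : Type*) [Field F] [Fintype F] (hF : Fintype.card F = 2 ^ e)
    (z₀ : F) (hz₀ : z₀ ≠ 0)
    (h₀ : Polynomial F)
    (hdef : h₀ = ∑ i ∈ Finset.range e, C (z₀ ^ 2 ^ i) * X ^ 2 ^ i) :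
    C z₀ * ∏ α : F, (X + C (α + α ^ 2 * z₀)) = h₀ ^ 2 ∧
      (∀ α : F, h₀.eval (α + α ^ 2 * z₀) = 0) ∧
      h₀.Separable ∧ h₀.natDegree = 2 ^ (e - 1) := by
  have : CharP F 2 := charP_of_card_eq_prime_pow hF
  have he : e ≠ 0 := by
    rintro rfl
    exact (Fintype.one_lt_card (α := F)).ne' hF
  have hzq : z₀ ^ 2 ^ e = z₀ := hF ▸ FiniteField.pow_card z₀
  have hcomp : h₀.comp (X + C z₀ * X ^ 2) = C z₀ * (X ^ 2 ^ e - X) := by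
    rw [hdef, sum_C_pow_mul_X_pow_comp_X_add_C_mul_X_sq, hzq, mul_sub]
  have main : C z₀ * ∏ α : F, (X + C (α + α ^ 2 * z₀)) = h₀ ^ 2 := by
    refine eq_of_comp_eq_comp ((natDegree_X_add_C_mul_X_sq hz₀).trans_ne two_ne_zero) ?_
    rw [mul_comp, C_comp, prod_X_add_C_comp_X_add_C_mul_X_sq hz₀, pow_comp, hcomp, hF, ← C_pow,
      hzq]
    ring
  refine ⟨main, fun α => ?_, ?_, ?_⟩
  · have := congrArg (eval α) hcomp
    rw [← hF] at this
    simpa [eval_comp, FiniteField.pow_card, mul_comm z₀] using this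
  · rw [separable_def', hdef, derivative_sum_C_pow_mul_X_pow z₀ he]
    exact ⟨0, C z₀⁻¹, by simp [← C_mul, hz₀]⟩
  · have hdeg := congrArg natDegree main
    rw [natDegree_C_mul hz₀, natDegree_prod_of_monic _ _ fun α _ => monic_X_add_C _,
      natDegree_pow] at hdeg
    simp only [natDegree_X_add_C, Finset.sum_const, Finset.card_univ, hF, smul_eq_mul,
      mul_one] at hdeg
    have h2e : 2 ^ e = 2 * 2 ^ (e - 1) := by rw [← pow_succ']; congr 1; omega
    omega

/-- For `q = 2^e` and a fixed nonzero `z₀ ∈ F_q`, setting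
`h₀(x) = Σ_{i=0}^{e-1} z₀^(2^i)·x^(2^i)`, one has
`z₀·∏_{α ∈ F_q}(x + α + α²z₀) = h₀(x)²`; in particular every element of
`S₀ = {α + α²z₀ : α ∈ F_q}` is a root of the separable polynomial `h₀`,
which has degree `q/2 = 2^(e-1)`. -/
theorem prod_eq_h₀_sq (e : ℕ) (he : 2 ≤ e)
    (F : Type*) [Field F] [Fintype F] (hF : Fintype.card F = 2 ^ e)
    (z₀ : F) (hz₀ : z₀ ≠ 0)
    (h₀ : Polynomial F)
    (hdef : h₀ = ∑ i ∈ Finset.range e, C (z₀ ^ 2 ^ i) * X ^ 2 ^ i) :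
    C z₀ * ∏ α : F, (X + C (α + α ^ 2 * z₀)) = h₀ ^ 2 ∧
      (∀ α : F, h₀.eval (α + α ^ 2 * z₀) = 0) ∧
      h₀.Separable ∧ h₀.natDegree = 2 ^ (e - 1) :=
  prod_eq_h₀_sq_general e F hF z₀ hz₀ h₀ hdef
end

section
/- Let q = 2^e with e ≥ 2 and let F_q be the finite field with q elements. For h(x,z) := z·∏_{α∈F_q}(x + α + α²z), the set of values of h on F_q × F_q is exactly {0, 1}; that is, {h(x,z) : x, z ∈ F_q} = {0, 1}. -/
/-!
For `z ≠ 0` the factors of `h(x, z)` are the values at `α ∈ F_q` of the quadratic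
`zX² + X + x`. If it has a root in `F_q`, then `h(x, z) = 0`. Otherwise its roots `r` and
`r + z⁻¹` (in characteristic 2) lie outside `F_q` and are swapped by the Frobenius `s ↦ s^q`, so
`∏_α (s - α) = s^q - s` gives `∏_α (α + r)(α + r + z⁻¹) = (z⁻¹)²` and `h(x, z) = z · z^q · z⁻² = 1`.
The value 1 is attained: `α ↦ α + α²` identifies `0` and `1`, so it misses some `x`, and then
`zX² + X + x` with `z = 1` has no root in `F_q`.
-/

open Polynomial Finset

namespace CharTwo

variable {K : Type*} [Field K] [CharP K 2]

theorem quadratic_eq_mul_mul {a c r : K} (ha : a ≠ 0) (hr : a * r ^ 2 + r + c = 0) (t : K) :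
    a * t ^ 2 + t + c = a * ((t + r) * (t + (r + a⁻¹))) := by
  have h2 : (2 : K) = 0 := two_eq_zero
  have hainv : a * a⁻¹ = 1 := mul_inv_cancel₀ ha
  linear_combination -hr - (t + r) * hainv + (c - a * t * r) * h2

theorem eq_or_eq_add_inv_of_quadratic {a c r s : K} (ha : a ≠ 0) (hr : a * r ^ 2 + r + c = 0)
    (hs : a * s ^ 2 + s + c = 0) : s = r ∨ s = r + a⁻¹ := by
  rw [quadratic_eq_mul_mul ha hr, mul_eq_zero, mul_eq_zero] at hs
  rcases hs with ha0 | hsr | hsr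
  · exact absurd ha0 ha
  · exact .inl (CharTwo.add_eq_zero.mp hsr)
  · exact .inr (CharTwo.add_eq_zero.mp hsr)

theorem exists_forall_add_add_sq_ne_zero (F : Type*) [Field F] [Finite F] [CharP F 2] :
    ∃ x : F, ∀ a : F, x + a + a ^ 2 ≠ 0 := by
  have hni : ¬ Function.Injective fun a : F => a + a ^ 2 := fun h =>
    zero_ne_one (h (a₁ := 0) (a₂ := 1) (by simp [add_self_eq_zero]))
  obtain ⟨x, hx⟩ : ∃ x : F, ∀ a, a + a ^ 2 ≠ x := by
    simpa [Function.Surjective] using mt Finite.injective_iff_surjective.mpr hni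
  refine ⟨x, fun a hxa => hx a ?_⟩
  rw [add_assoc, add_comm] at hxa
  exact CharTwo.add_eq_zero.mp hxa

end CharTwo

namespace FiniteField

variable {F : Type*} [Field F] [Fintype F]

theorem prod_univ_X_sub_C : ∏ a : F, (X - C a) = X ^ Fintype.card F - X := by
  have hmonic : (X ^ Fintype.card F - X : F[X]).Monic :=
    monic_X_pow_sub (by simpa using Fintype.one_lt_card (α := F))
  have hcard : Multiset.card (X ^ Fintype.card F - X : F[X]).roots =
      (X ^ Fintype.card F - X : F[X]).natDegree := by
    rw [roots_X_pow_card_sub_X, X_pow_card_sub_X_natDegree_eq F Fintype.one_lt_card]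
    rfl
  rw [← prod_multiset_X_sub_C_of_monic_of_roots_card_eq hmonic hcard, roots_X_pow_card_sub_X]
  rfl

theorem prod_univ_sub_algebraMap {K : Type*} [CommRing K] [Algebra F K] (s : K) :
    ∏ a : F, (s - algebraMap F K a) = s ^ Fintype.card F - s := by
  simpa using congrArg (aeval s) (prod_univ_X_sub_C (F := F))

section CharTwo

variable {K : Type*} [Field K] [CharP K 2] [Algebra F K]

theorem prod_add_mul_add_of_pow_card_swap {r r' : K} (hr : r ^ Fintype.card F = r')
    (hr' : r' ^ Fintype.card F = r) :
    ∏ a : F, ((algebraMap F K a + r) * (algebraMap F K a + r')) = (r + r') ^ 2 := by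
  have hprod (s : K) : ∏ a : F, (algebraMap F K a + s) = s ^ Fintype.card F + s := by
    simp_rw [← CharTwo.sub_eq_add, ← prod_univ_sub_algebraMap s, CharTwo.sub_eq_add, add_comm]
  rw [prod_mul_distrib, hprod, hprod, hr, hr', add_comm r, sq]

theorem mul_prod_eq_one_of_root {x z : F} (hz : z ≠ 0) (hx : ∀ a : F, x + a + a ^ 2 * z ≠ 0)
    {r : K} (hr : algebraMap F K z * r ^ 2 + r + algebraMap F K x = 0) :
    z * ∏ a : F, (x + a + a ^ 2 * z) = 1 := by
  set ι := algebraMap F K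
  set φ := frobeniusAlgHom F K
  have hz' : ι z ≠ 0 := (map_ne_zero ι).mpr hz
  have hfix (a : F) : ι a ^ Fintype.card F = ι a := by rw [← map_pow, pow_card]
  have hfactor (a : F) : ι (x + a + a ^ 2 * z) = ι z * ((ι a + r) * (ι a + (r + (ι z)⁻¹))) := by
    rw [← CharTwo.quadratic_eq_mul_mul hz' hr]
    simp only [map_add, map_mul, map_pow]
    ring
  have hrq_root : ι z * (r ^ Fintype.card F) ^ 2 + r ^ Fintype.card F + ι x = 0 := by
    have := congrArg φ hr
    simpa only [φ, map_add, map_mul, map_pow, map_zero, frobeniusAlgHom_apply, hfix] using this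
  have hrq : r ^ Fintype.card F = r + (ι z)⁻¹ := by
    -- a root fixed by Frobenius lies in `F`, where the quadratic has no root
    refine (CharTwo.eq_or_eq_add_inv_of_quadratic hz' hr hrq_root).resolve_left fun hrq => ?_
    have hprod : ∏ a : F, (r - ι a) = 0 := by rw [prod_univ_sub_algebraMap, hrq, sub_self]
    obtain ⟨a, -, ha⟩ := prod_eq_zero_iff.mp hprod
    refine hx a (ι.injective ?_)
    rw [hfactor, ← sub_eq_zero.mp ha, CharTwo.add_self_eq_zero, zero_mul, mul_zero, map_zero]
  have hr'q : (r + (ι z)⁻¹) ^ Fintype.card F = r := by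
    have := map_add φ r (ι z⁻¹)
    simp only [φ, frobeniusAlgHom_apply, hfix, map_inv₀] at this
    rw [this, hrq, CharTwo.add_cancel_right]
  have hswap : ∏ a : F, ((ι a + r) * (ι a + (r + (ι z)⁻¹))) = (ι z)⁻¹ ^ 2 :=
    (prod_add_mul_add_of_pow_card_swap hrq hr'q).trans (by rw [CharTwo.add_cancel_left])
  apply ι.injective
  rw [map_mul, map_prod, map_one]
  simp_rw [hfactor]
  rw [prod_mul_distrib, prod_const, card_univ, hswap, hfix]
  field_simp

end CharTwo

theorem mul_prod_eq_one [CharP F 2] {x z : F} (hz : z ≠ 0)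
    (hx : ∀ a : F, x + a + a ^ 2 * z ≠ 0) :
    z * ∏ a : F, (x + a + a ^ 2 * z) = 1 := by
  let K := AlgebraicClosure F
  have hdeg : (C (algebraMap F K z) * X ^ 2 + X + C (algebraMap F K x)).degree = 2 := by
    compute_degree!
  obtain ⟨r, hr⟩ := IsAlgClosed.exists_root _ (by rw [hdeg]; decide)
  exact mul_prod_eq_one_of_root hz hx (by simpa using hr)

end FiniteField

theorem h_values_eq_zero_one_general (e : ℕ)
    (F : Type*) [Field F] [Fintype F] (hF : Fintype.card F = 2 ^ e) :
    {w : F | ∃ x z : F, w = z * ∏ α : F, (x + α + α ^ 2 * z)} = {0, 1} := by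
  have : CharP F 2 := charP_of_card_eq_prime_pow hF
  ext w
  simp only [Set.mem_ofPred_eq, Set.mem_insert_iff, Set.mem_singleton_iff]
  constructor
  · rintro ⟨x, z, rfl⟩
    by_cases hz : z = 0
    · exact .inl (by rw [hz, zero_mul])
    by_cases hx : ∃ a, x + a + a ^ 2 * z = 0
    · obtain ⟨a, ha⟩ := hx
      exact .inl (by rw [prod_eq_zero (mem_univ a) ha, mul_zero])
    · exact .inr (FiniteField.mul_prod_eq_one hz (not_exists.mp hx))
  · rintro (rfl | rfl)
    · exact ⟨0, 0, by rw [zero_mul]⟩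
    · obtain ⟨x, hx⟩ := CharTwo.exists_forall_add_add_sq_ne_zero F
      refine ⟨x, 1, (FiniteField.mul_prod_eq_one one_ne_zero fun a => ?_).symm⟩
      simpa only [mul_one] using hx a

/-- For `q = 2^e`, the set of values of `h(x,z) = z·∏_{α ∈ F_q}(x + α + α²z)`
on `F_q × F_q` is exactly `{0, 1}`. -/
theorem h_values_eq_zero_one (e : ℕ) (he : 2 ≤ e)
    (F : Type*) [Field F] [Fintype F] (hF : Fintype.card F = 2 ^ e) :
    {w : F | ∃ x z : F, w = z * ∏ α : F, (x + α + α ^ 2 * z)} = {0, 1} :=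
  h_values_eq_zero_one_general e F hF
end

section
/- Let q = 2^e with e ≥ 2, let F_q be the finite field with q elements, let K be a commutative F_q-algebra, and let c ∈ K. Define F(X,Y,Z) := Z·∏_{α∈F_q}(X + αY + α²Z) + c·Y^{q+1} ∈ K[X,Y,Z] (the homogenization of degree q+1 of f(x,y) = ∏_{α∈F_q}(x + αy + α²) + c·y^{q+1}). Then F is symmetric in X and Z: F(Z,Y,X) = F(X,Y,Z) in K[X,Y,Z]. -/
/-!
For `α ≠ 0` the factor `Z + αY + α²X` equals `α² (X + α⁻¹Y + α⁻²Z)`, so over the nonzero `α`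
the product `∏ (Z + αY + α²X)` is `∏ (X + αY + α²Z)` reindexed by inversion, times
`∏ α² = (∏ α)² = (-1)² = 1` (Wilson's theorem in `F_q`). The factor at `α = 0` exchanges
`X` and `Z`, and `c Y^(q+1)` does not involve them.
-/

open MvPolynomial Finset

theorem Fintype.prod_eq_mul_prod_units {G₀ M : Type*} [GroupWithZero G₀] [Fintype G₀]
    [DecidableEq G₀] [CommMonoid M] (f : G₀ → M) :
    ∏ a, f a = f 0 * ∏ u : G₀ˣ, f u := by
  rw [← mul_prod_erase univ f (mem_univ 0)]
  congr 1
  exact prod_bij' (fun a ha => Units.mk0 a (ne_of_mem_erase ha)) (fun u _ => u)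
    (by simp) (by simp) (by simp) (by simp) (by simp)

theorem FiniteField.prod_univ_units_sq {F : Type*} [Field F] [Fintype F] [DecidableEq F] :
    ∏ u : Fˣ, (u : F) ^ 2 = 1 := by
  rw [Finset.prod_pow, ← Units.coe_prod, FiniteField.prod_univ_units_id_eq_neg_one]
  simp

theorem FiniteField.mul_prod_quadratic_swap {F R : Type*} [Field F] [Fintype F] [CommSemiring R]
    (φ : F →+* R) (x y z : R) :
    x * ∏ α : F, (z + φ α * y + φ α ^ 2 * x) = z * ∏ α : F, (x + φ α * y + φ α ^ 2 * z) := by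
  classical
  have hunit (u : Fˣ) : z + φ u * y + φ u ^ 2 * x =
      φ ((u : F) ^ 2) * (x + φ ↑u⁻¹ * y + φ ↑u⁻¹ ^ 2 * z) := by
    simp only [mul_add, ← mul_assoc, ← map_pow, ← map_mul, Units.val_inv_eq_inv_val]
    rw [show (u : F) ^ 2 * (u : F)⁻¹ = u by field_simp,
      show (u : F) ^ 2 * (u : F)⁻¹ ^ 2 = 1 by field_simp, map_one, one_mul]
    ring
  have hinv : ∏ u : Fˣ, (x + φ ↑u⁻¹ * y + φ ↑u⁻¹ ^ 2 * z) =
      ∏ u : Fˣ, (x + φ u * y + φ u ^ 2 * z) :=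
    Fintype.prod_equiv (Equiv.inv Fˣ) _ _ fun _ => rfl
  simp only [Fintype.prod_eq_mul_prod_units (M := R), hunit, prod_mul_distrib, hinv, ← map_prod,
    FiniteField.prod_univ_units_sq, map_one, one_mul, map_zero, zero_mul, add_zero,
    zero_pow two_ne_zero]
  ring

theorem F_symmetric_in_X_Z_general (e : ℕ)
    (Fq : Type*) [Field Fq] [Fintype Fq]
    (K : Type*) [CommRing K] [Algebra Fq K] (c : K)
    (F : MvPolynomial (Fin 3) K)
    (hdef : F = X 2 * (∏ α : Fq,
        (X 0 + C (algebraMap Fq K α) * X 1 + C (algebraMap Fq K (α ^ 2)) * X 2))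
      + C c * X 1 ^ (2 ^ e + 1)) :
    aeval ![X 2, X 1, X 0] F = F := by
  subst hdef
  simp only [map_add, map_mul, map_pow, map_prod, aeval_X, aeval_C, algebraMap_eq,
    Matrix.cons_val_zero, Matrix.cons_val_one, Matrix.cons_val_two, Matrix.head_cons,
    Matrix.tail_cons]
  congr 1
  exact FiniteField.mul_prod_quadratic_swap
    ((C : K →+* MvPolynomial (Fin 3) K).comp (algebraMap Fq K)) _ _ _

/-- For `q = 2^e`, an `F_q`-algebra `K` and `c ∈ K`, the homogeneous polynomial
`F(X,Y,Z) = Z·∏_{α ∈ F_q}(X + αY + α²Z) + c·Y^(q+1)` is symmetric in `X` and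
`Z`: `F(Z,Y,X) = F(X,Y,Z)`. -/
theorem F_symmetric_in_X_Z (e : ℕ) (he : 2 ≤ e)
    (Fq : Type*) [Field Fq] [Fintype Fq] (hF : Fintype.card Fq = 2 ^ e)
    (K : Type*) [CommRing K] [Algebra Fq K] (c : K)
    (F : MvPolynomial (Fin 3) K)
    (hdef : F = X 2 * (∏ α : Fq,
        (X 0 + C (algebraMap Fq K α) * X 1 + C (algebraMap Fq K (α ^ 2)) * X 2))
      + C c * X 1 ^ (2 ^ e + 1)) :
    aeval ![X 2, X 1, X 0] F = F :=
  F_symmetric_in_X_Z_general e Fq K c F hdef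
end

section
/- Let q = 2^e with e ≥ 2, let K be an algebraically closed field of characteristic 2 containing F_q, and let c ∈ K with c ≠ 0 and c ≠ 1. Define F(X,Y,Z) := Z·∏_{α∈F_q}(X + αY + α²Z) + c·Y^{q+1} ∈ K[X,Y,Z]. Then the projective plane curve F = 0 is smooth: there is no (x,y,z) ∈ K³ \ {(0,0,0)} at which F and all three partial derivatives F_X, F_Y, F_Z vanish simultaneously. -/
/-!
At a point `(x, y, z)` put `g(T) = x + yT + zT²` and `N(β) = β^q + β = ∏_{α ∈ F_q} (β + α)`.
Differentiating `N` (its derivative is `1` in characteristic 2) gives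
`∑_α ∏_{γ ≠ α} (β + γ) = 1` and `∑_α α ∏_{γ ≠ α} (β + γ) = β`.

If `z = 0`, then `F = c y^{q+1}` and `F_Z = x^q` vanish only at the origin. Otherwise
`g = z (T + β₁)(T + β₂)` over the algebraically closed field. A double root makes `F_X = z^q`.
For distinct roots, `F_X = 0` forces `N(β₁) = N(β₂)`, so `s = β₁ + β₂` satisfies `s^q = s`; then
`F_Y = 0` reads `N(β₁) = c s`, and `F = 0` reads `N(β₁)² = c s²`, whence `c² = c`.
-/

open Finset

theorem Derivation.map_finset_prod {R A : Type*} [CommSemiring R] [CommSemiring A] [Algebra R A]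
    {ι : Type*} [DecidableEq ι] (D : Derivation R A A) (s : Finset ι) (g : ι → A) :
    D (∏ j ∈ s, g j) = ∑ j ∈ s, (∏ k ∈ s.erase j, g k) * D (g j) := by
  induction s using Finset.induction_on with
  | empty => simp
  | insert a s ha ih =>
    rw [prod_insert ha, Derivation.leibniz, ih, sum_insert ha, erase_insert ha, smul_eq_mul,
      smul_eq_mul, mul_sum, add_comm]
    congr 1
    refine sum_congr rfl fun j hj => ?_
    rw [erase_insert_of_ne (ne_of_mem_of_not_mem hj ha).symm,
      prod_insert fun h => ha (mem_of_mem_erase h)]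
    ring

theorem mul_sum_mul_prod_erase_const_mul {ι R : Type*} [Fintype ι] [DecidableEq ι]
    [CommSemiring R] (z : R) (w M : ι → R) :
    z * ∑ i, w i * ∏ j ∈ univ.erase i, z * M j =
      z ^ Fintype.card ι * ∑ i, w i * ∏ j ∈ univ.erase i, M j := by
  simp only [mul_sum, prod_mul_distrib, prod_const, card_erase_of_mem (mem_univ _), card_univ]
  refine sum_congr rfl fun i _ => ?_
  have : Nonempty ι := ⟨i⟩
  obtain ⟨n, hn⟩ := Nat.exists_eq_succ_of_ne_zero (Fintype.card_ne_zero (α := ι))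
  rw [hn, Nat.succ_sub_one, pow_succ']
  ring

theorem IsAlgClosed.exists_eq_mul_mul_and_eq_mul_add {K : Type*} [Field K] [IsAlgClosed K]
    {z : K} (hz : z ≠ 0) (x y : K) : ∃ β₁ β₂ : K, x = z * (β₁ * β₂) ∧ y = z * (β₁ + β₂) := by
  open Polynomial in
  obtain ⟨r, hr⟩ := IsAlgClosed.exists_root (C z * X ^ 2 + C y * X + C x)
    (by rw [degree_quadratic hz]; decide)
  have hr : z * r ^ 2 + y * r + x = 0 := by simpa using hr
  refine ⟨-r, y / z + r, ?_, ?_⟩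
  · field_simp
    linear_combination hr
  · field_simp
    ring

namespace FiniteField

open Polynomial

variable (Fq : Type*) [Field Fq] [Fintype Fq]

theorem prod_X_sub_C_eq_X_pow_card_sub_X_s11 : ∏ a : Fq, (X - C a) = X ^ Fintype.card Fq - X := by
  have hq := Fintype.one_lt_card (α := Fq)
  have hmonic : (X ^ Fintype.card Fq - X : Fq[X]).Monic :=
    monic_X_pow_sub (by rw [degree_X]; exact_mod_cast hq)
  have h := prod_multiset_X_sub_C_of_monic_of_roots_card_eq hmonic (by
    rw [roots_X_pow_card_sub_X, X_pow_card_sub_X_natDegree_eq _ hq]; rfl)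
  rwa [roots_X_pow_card_sub_X] at h

theorem sum_prod_erase_X_sub_C [DecidableEq Fq] :
    ∑ a : Fq, ∏ b ∈ univ.erase a, (X - C b) = -1 := by
  have h := congrArg derivative (prod_X_sub_C_eq_X_pow_card_sub_X_s11 Fq)
  simpa [derivative_prod_finset, derivative_X_pow] using h

end FiniteField

section CharTwo

variable {Fq K : Type*} [Field Fq] [Fintype Fq] [Field K] (f : Fq →+* K)

local notation "q" => Fintype.card Fq

include f in
theorem natCast_card_eq_zero_of_ringHom : (q : K) = 0 := by
  rw [← map_natCast f, FiniteField.cast_card_eq_zero, map_zero]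

variable [CharP K 2]

include f in
theorem add_pow_card_of_ringHom (a b : K) : (a + b) ^ q = a ^ q + b ^ q := by
  have := f.charP f.injective 2
  obtain ⟨n, -, hn⟩ := FiniteField.card Fq 2
  rw [hn, add_pow_char_pow]

theorem prod_add_eq_pow_card_add (β : K) : ∏ α, (β + f α) = β ^ q + β := by
  simpa [map_prod, CharTwo.sub_eq_add] using
    congrArg (Polynomial.eval₂RingHom f β) (FiniteField.prod_X_sub_C_eq_X_pow_card_sub_X_s11 Fq)

variable [DecidableEq Fq]

theorem sum_prod_erase_add_eq_one (β : K) : ∑ α, ∏ γ ∈ univ.erase α, (β + f γ) = 1 := by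
  simpa [map_prod, CharTwo.sub_eq_add, CharTwo.neg_eq] using
    congrArg (Polynomial.eval₂RingHom f β) (FiniteField.sum_prod_erase_X_sub_C Fq)

theorem sum_mul_prod_erase_add_eq (β : K) : ∑ α, f α * ∏ γ ∈ univ.erase α, (β + f γ) = β := by
  have hsplit : ∀ α, f α * ∏ γ ∈ univ.erase α, (β + f γ) =
      (β ^ q + β) + β * ∏ γ ∈ univ.erase α, (β + f γ) := fun α => by
    rw [← prod_add_eq_pow_card_add f, ← mul_prod_erase univ _ (mem_univ α)]
    linear_combination (-∏ γ ∈ univ.erase α, (β + f γ)) * CharTwo.add_self_eq_zero β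
  rw [sum_congr rfl fun α _ => hsplit α, sum_add_distrib, ← mul_sum, sum_const, card_univ,
    nsmul_eq_mul, natCast_card_eq_zero_of_ringHom f, sum_prod_erase_add_eq_one, zero_mul,
    zero_add, mul_one]

theorem sum_prod_erase_mul_self_eq_one (β : K) :
    ∑ α, ∏ γ ∈ univ.erase α, ((β + f γ) * (β + f γ)) = 1 := by
  simp_rw [prod_mul_distrib]
  rw [← CharTwo.sum_mul_self, sum_prod_erase_add_eq_one, one_mul]

theorem add_mul_sum_mul_prod_erase_mul (w : Fq → K) (β₁ β₂ : K) :
    (β₁ + β₂) * ∑ α, w α * ∏ γ ∈ univ.erase α, ((β₁ + f γ) * (β₂ + f γ)) =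
      (β₂ ^ q + β₂) * ∑ α, w α * ∏ γ ∈ univ.erase α, (β₁ + f γ) +
        (β₁ ^ q + β₁) * ∑ α, w α * ∏ γ ∈ univ.erase α, (β₂ + f γ) := by
  simp only [mul_sum, ← sum_add_distrib, prod_mul_distrib]
  refine sum_congr rfl fun α _ => ?_
  -- `N(βᵢ) = (βᵢ + α) ∏_{γ ≠ α} (βᵢ + γ)` and `(β₁ + α) + (β₂ + α) = β₁ + β₂`
  rw [← prod_add_eq_pow_card_add f β₁, ← prod_add_eq_pow_card_add f β₂,
    ← mul_prod_erase univ (fun γ => β₁ + f γ) (mem_univ α),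
    ← mul_prod_erase univ (fun γ => β₂ + f γ) (mem_univ α)]
  linear_combination (-(w α * f α * (∏ γ ∈ univ.erase α, (β₁ + f γ)) *
    ∏ γ ∈ univ.erase α, (β₂ + f γ))) * CharTwo.two_eq_zero (R := K)

theorem eq_zero_or_eq_one_of_roots {β₁ β₂ c : K} (hβ : β₁ ≠ β₂)
    (hF : (β₁ ^ q + β₁) * (β₂ ^ q + β₂) + c * (β₁ + β₂) ^ (q + 1) = 0)
    (hX : ∑ α, ∏ γ ∈ univ.erase α, ((β₁ + f γ) * (β₂ + f γ)) = 0)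
    (hY : ∑ α, f α * ∏ γ ∈ univ.erase α, ((β₁ + f γ) * (β₂ + f γ)) + c * (β₁ + β₂) ^ q = 0) :
    c = 0 ∨ c = 1 := by
  have hs : β₁ + β₂ ≠ 0 := fun h => hβ (CharTwo.add_eq_zero.mp h)
  have hN : β₁ ^ q + β₁ = β₂ ^ q + β₂ := by
    have h := add_mul_sum_mul_prod_erase_mul f 1 β₁ β₂
    simp only [Pi.one_apply, one_mul, hX, sum_prod_erase_add_eq_one, mul_zero, mul_one] at h
    exact (CharTwo.add_eq_zero.mp h.symm).symm
  have hfrob : (β₁ + β₂) ^ q = β₁ + β₂ := by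
    rw [add_pow_card_of_ringHom f]
    linear_combination hN + (β₂ ^ q - β₁) * CharTwo.two_eq_zero (R := K)
  have hS : ∑ α, f α * ∏ γ ∈ univ.erase α, ((β₁ + f γ) * (β₂ + f γ)) = β₁ ^ q + β₁ := by
    have h := add_mul_sum_mul_prod_erase_mul f f β₁ β₂
    rw [sum_mul_prod_erase_add_eq, sum_mul_prod_erase_add_eq, ← hN] at h
    exact mul_left_cancel₀ hs (by rw [h]; ring)
  have hNc : β₁ ^ q + β₁ = c * (β₁ + β₂) := by
    rw [hS, hfrob] at hY
    exact CharTwo.add_eq_zero.mp hY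
  have hc : (β₁ + β₂) ^ 2 * (c * (c + 1)) = 0 := by
    rw [← hN, hNc, pow_succ, hfrob] at hF
    linear_combination hF
  rcases mul_eq_zero.mp ((mul_eq_zero.mp hc).resolve_left (pow_ne_zero 2 hs)) with h | h
  · exact .inl h
  · exact .inr (CharTwo.add_eq_zero.mp h)

end CharTwo

section Curve

open MvPolynomial

variable {Fq K : Type*} [Field Fq] [Field K] (f : Fq →+* K)

noncomputable def lineForm (α : Fq) : MvPolynomial (Fin 3) K :=
  X 0 + C (f α) * X 1 + C (f (α ^ 2)) * X 2

theorem eval_lineForm (v : Fin 3 → K) (α : Fq) :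
    eval v (lineForm f α) = v 0 + f α * v 1 + f α ^ 2 * v 2 := by
  simp [lineForm]

theorem pderiv_lineForm (i : Fin 3) (α : Fq) : pderiv i (lineForm f α) = C (f α ^ (i : ℕ)) := by
  fin_cases i <;> simp [lineForm]

variable [Fintype Fq]

local notation "q" => Fintype.card Fq

noncomputable def curvePoly (c : K) : MvPolynomial (Fin 3) K :=
  X 2 * ∏ α, lineForm f α + C c * X 1 ^ (q + 1)

def IsSingularPoint (G : MvPolynomial (Fin 3) K) (v : Fin 3 → K) : Prop :=
  eval v G = 0 ∧ ∀ i, eval v (pderiv i G) = 0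

theorem eval_curvePoly (c : K) (v : Fin 3 → K) :
    eval v (curvePoly f c) = v 2 * ∏ α, eval v (lineForm f α) + c * v 1 ^ (q + 1) := by
  simp [curvePoly]

theorem eval_pderiv_curvePoly [CharP K 2] [DecidableEq Fq] (c : K) (v : Fin 3 → K) (i : Fin 3) :
    eval v (pderiv i (curvePoly f c)) =
      eval v (pderiv i (X 2)) * ∏ α, eval v (lineForm f α) +
        v 2 * ∑ α, f α ^ (i : ℕ) * ∏ γ ∈ univ.erase α, eval v (lineForm f γ) +
          c * v 1 ^ q * eval v (pderiv i (X 1)) := by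
  simp [curvePoly, Derivation.map_finset_prod, pderiv_lineForm, natCast_card_eq_zero_of_ringHom f,
    mul_comm _ (f _ ^ _)]
  ring

variable {f}

theorem IsSingularPoint.eq_zero_of_apply_two_eq_zero [CharP K 2] {c : K} {v : Fin 3 → K}
    (hv : IsSingularPoint (curvePoly f c) v) (hc : c ≠ 0) (hz : v 2 = 0) : v = 0 := by
  classical
  obtain ⟨h0, hD⟩ := hv
  have hy : v 1 = 0 := by
    rw [eval_curvePoly, hz, zero_mul, zero_add] at h0
    exact pow_eq_zero_iff (Nat.succ_ne_zero _) |>.mp ((mul_eq_zero.mp h0).resolve_left hc)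
  have hx : v 0 = 0 := by
    simpa [eval_pderiv_curvePoly, eval_lineForm, hz, hy] using hD 2
  ext i
  fin_cases i <;> assumption

theorem IsSingularPoint.eq_zero_or_eq_one [CharP K 2] [IsAlgClosed K] {c : K} {v : Fin 3 → K}
    (hv : IsSingularPoint (curvePoly f c) v) (hz : v 2 ≠ 0) : c = 0 ∨ c = 1 := by
  classical
  obtain ⟨h0, hD⟩ := hv
  obtain ⟨β₁, β₂, hx, hy⟩ := IsAlgClosed.exists_eq_mul_mul_and_eq_mul_add hz (v 0) (v 1)
  have hL : ∀ γ, eval v (lineForm f γ) = v 2 * ((β₁ + f γ) * (β₂ + f γ)) := fun γ => by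
    rw [eval_lineForm, hx, hy]
    ring
  have hX := hD 0
  have hY := hD 1
  simp only [eval_curvePoly, eval_pderiv_curvePoly, hL, mul_sum_mul_prod_erase_const_mul]
    at h0 hX hY
  simp only [pderiv_X_self, pderiv_X_of_ne, ne_eq, Fin.reduceEq, not_false_eq_true, map_zero,
    map_one, zero_mul, mul_zero, add_zero, mul_one, Fin.val_zero, Fin.val_one, pow_zero, pow_one,
    one_mul, zero_add] at hX hY
  replace hX := (mul_eq_zero.mp hX).resolve_left (pow_ne_zero q hz)
  rw [prod_mul_distrib, prod_const, card_univ, prod_mul_distrib, prod_add_eq_pow_card_add,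
    prod_add_eq_pow_card_add] at h0
  rw [hy, mul_pow] at h0 hY
  rcases eq_or_ne β₁ β₂ with rfl | hβ
  · exact absurd hX (by rw [sum_prod_erase_mul_self_eq_one]; exact one_ne_zero)
  refine eq_zero_or_eq_one_of_roots f hβ ?_ hX ?_
  · refine (mul_eq_zero.mp ?_).resolve_left (pow_ne_zero (q + 1) hz)
    linear_combination h0
  · refine (mul_eq_zero.mp ?_).resolve_left (pow_ne_zero q hz)
    linear_combination hY

end Curve

open MvPolynomial

theorem curve_F_is_smooth_general (e : ℕ)
    (Fq : Type*) [Field Fq] [Fintype Fq] (hF : Fintype.card Fq = 2 ^ e)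
    (K : Type*) [Field K] [IsAlgClosed K] [CharP K 2] [Algebra Fq K]
    (c : K) (hc0 : c ≠ 0) (hc1 : c ≠ 1)
    (F : MvPolynomial (Fin 3) K)
    (hdef : F = X 2 * (∏ α : Fq,
        (X 0 + C (algebraMap Fq K α) * X 1 + C (algebraMap Fq K (α ^ 2)) * X 2))
      + C c * X 1 ^ (2 ^ e + 1)) :
    ¬ ∃ v : Fin 3 → K, v ≠ 0 ∧ eval v F = 0 ∧ ∀ i : Fin 3, eval v (pderiv i F) = 0 := by
  obtain rfl : F = curvePoly (algebraMap Fq K) c := by rw [hdef, ← hF]; rfl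
  rintro ⟨v, hv, hsing⟩
  by_cases hz : v 2 = 0
  · exact hv (IsSingularPoint.eq_zero_of_apply_two_eq_zero hsing hc0 hz)
  · rcases IsSingularPoint.eq_zero_or_eq_one hsing hz with h | h
    exacts [hc0 h, hc1 h]

/-- For `q = 2^e`, an algebraically closed field `K` of characteristic 2
containing `F_q`, and `c ∈ K` with `c ≠ 0, 1`, the projective plane curve
`F(X,Y,Z) = Z·∏_{α ∈ F_q}(X + αY + α²Z) + c·Y^(q+1) = 0` is smooth. -/
theorem curve_F_is_smooth (e : ℕ) (he : 2 ≤ e)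
    (Fq : Type*) [Field Fq] [Fintype Fq] (hF : Fintype.card Fq = 2 ^ e)
    (K : Type*) [Field K] [IsAlgClosed K] [CharP K 2] [Algebra Fq K]
    (c : K) (hc0 : c ≠ 0) (hc1 : c ≠ 1)
    (F : MvPolynomial (Fin 3) K)
    (hdef : F = X 2 * (∏ α : Fq,
        (X 0 + C (algebraMap Fq K α) * X 1 + C (algebraMap Fq K (α ^ 2)) * X 2))
      + C c * X 1 ^ (2 ^ e + 1)) :
    ¬ ∃ v : Fin 3 → K, v ≠ 0 ∧ eval v F = 0 ∧ ∀ i : Fin 3, eval v (pderiv i F) = 0 :=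
  curve_F_is_smooth_general e Fq hF K c hc0 hc1 F hdef
end

section
/- Let q = 2^e with e ≥ 2, let K be an algebraically closed field of characteristic 2 containing F_q, let c ∈ K with c ≠ 0 and c ≠ 1, and let K(t) be the field of rational functions in one variable t over K. Then the polynomial φ(X) := ∏_{α∈F_q}(X + αt + α²) + c·t^{q+1} ∈ K(t)[X] is irreducible of degree q over K(t), and the field extension K(t)[X]/(φ) of K(t) is a Galois extension (of degree q). (This expresses that the point (1:0:0) is an inner Galois point of the smooth plane curve ∏_{α∈F_q}(x + αy + α²) + c·y^{q+1} = 0, the Galois group being generated by the substitutions x ↦ x + αy + α² for α ∈ F_q.) -/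
/-!
View `Φ(x, t) = ∏_α (x + αt + α²) + c t^(q+1)` as a polynomial in `t` over `K[x]`. The factor
for `α = 0` is `x` and the others have `t`-degree one, so `Φ = x g + c t^(q+1)` with
`deg_t g < q + 1` and `g(0, 0) = ∏_{α ≠ 0} α² ≠ 0`; hence `Φ` is Eisenstein at `x`. As `Φ` is
monic of degree `q` in `x`, Gauss's lemma makes `φ` irreducible over `K(t)`.

In characteristic 2 the map `α ↦ αt + α²` is additive and injective, so `φ(X + αt + α²) = φ(X)`
and the `q` distinct elements `x + αt + α²` of `K(t)[X]/(φ)` are roots of `φ`. Thus `φ` is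
separable and `K(t)[X]/(φ)` is its splitting field.
-/
open Polynomial

namespace Polynomial

section TranslationInvariant

variable {ι R : Type*} [Fintype ι] [CommRing R]

theorem monic_prod_X_add_C_add_C [Nontrivial R] [Nonempty ι] (a : ι → R) (b : R) :
    (∏ i, (X + C (a i)) + C b).Monic := by
  refine (monic_prod_of_monic _ _ fun i _ => monic_X_add_C (a i)).add_of_left ?_
  rw [degree_prod_of_monic _ _ fun i _ => monic_X_add_C (a i)]
  simp only [degree_X_add_C, Finset.sum_const, Finset.card_univ, nsmul_eq_mul, mul_one]
  exact degree_C_le.trans_lt (by exact_mod_cast Fintype.card_pos)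

theorem natDegree_prod_X_add_C_add_C [Nontrivial R] [Nonempty ι] (a : ι → R) (b : R) :
    (∏ i, (X + C (a i)) + C b).natDegree = Fintype.card ι := by
  rw [natDegree_add_C, natDegree_prod_of_monic _ _ fun i _ => monic_X_add_C (a i)]
  simp

theorem prod_X_add_C_add_C_comp_X_add_C {G : Type*} [AddCommGroup G] [Fintype G] (ℓ : G →+ R)
    (b : R) (h : G) :
    (∏ g, (X + C (ℓ g)) + C b).comp (X + C (ℓ h)) = ∏ g, (X + C (ℓ g)) + C b := by
  have hshift : ∀ g, (X + C (ℓ g)).comp (X + C (ℓ h)) = X + C (ℓ (h + g)) := fun g => by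
    rw [add_comp, X_comp, C_comp, map_add, C_add, add_assoc, add_comm (C (ℓ h))]
  rw [add_comp, C_comp, prod_comp, Finset.prod_congr rfl fun g _ => hshift g]
  congr 1
  exact Fintype.prod_equiv (Equiv.addLeft h) _ _ fun _ => rfl

end TranslationInvariant

theorem roots_eq_map_univ_of_injective {R ι : Type*} [CommRing R] [IsDomain R] [Fintype ι]
    {p : R[X]} (hp : p ≠ 0) {r : ι → R} (hr : Function.Injective r)
    (hroot : ∀ i, p.IsRoot (r i)) (hdeg : p.natDegree ≤ Fintype.card ι) :
    p.roots = Finset.univ.val.map r := by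
  have hnodup : (Finset.univ.val.map r).Nodup := Finset.univ.nodup.map hr
  refine (Multiset.eq_of_le_of_card_le ((Multiset.le_iff_subset hnodup).mpr ?_) ?_).symm
  · intro x hx
    obtain ⟨i, -, rfl⟩ := Multiset.mem_map.mp hx
    exact (mem_roots hp).mpr (hroot i)
  · simpa using (card_roots' p).trans hdeg

end Polynomial

theorem AdjoinRoot.isSplittingField_of_splits {F : Type*} [Field F] {p : F[X]}
    [Fact (Irreducible p)] (hsplits : (p.map (algebraMap F (AdjoinRoot p))).Splits) :
    IsSplittingField F (AdjoinRoot p) p := by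
  refine ⟨hsplits, eq_top_iff.mpr ?_⟩
  rw [← AdjoinRoot.adjoinRoot_eq_top]
  refine Algebra.adjoin_mono (Set.singleton_subset_iff.mpr ?_)
  rw [mem_rootSet_of_ne (Fact.out : Irreducible p).ne_zero, AdjoinRoot.aeval_eq, AdjoinRoot.mk_self]

theorem AdjoinRoot.isGalois_of_comp_X_add_C_eq_self {F ι : Type*} [Field F] [Fintype ι]
    {p : F[X]} [Fact (Irreducible p)] {a : ι → F} (ha : Function.Injective a)
    (hcomp : ∀ i, p.comp (X + C (a i)) = p) (hdeg : p.natDegree ≤ Fintype.card ι) :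
    IsGalois F (AdjoinRoot p) := by
  have hp : p ≠ 0 := (Fact.out : Irreducible p).ne_zero
  set r : ι → AdjoinRoot p := fun i => root p + of p (a i)
  have hr_inj : Function.Injective r := fun i j hij =>
    ha ((of p).injective (add_left_cancel hij))
  have hroot : ∀ i, (p.map (algebraMap F (AdjoinRoot p))).IsRoot (r i) := fun i => by
    have hri : r i = aeval (root p) (X + C (a i)) := by simp [r]
    rw [IsRoot, eval_map_algebraMap, hri, ← aeval_comp, hcomp i, AdjoinRoot.aeval_eq, mk_self]
  have hroots := roots_eq_map_univ_of_injective (map_ne_zero hp) hr_inj hroot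
    (by rwa [natDegree_map])
  have hsplits : (p.map (algebraMap F (AdjoinRoot p))).Splits := by
    refine splits_iff_card_roots.mpr (le_antisymm (card_roots' _) ?_)
    rw [hroots, natDegree_map]
    simpa using hdeg
  have hsep : p.Separable :=
    (nodup_aroots_iff_of_splits hp hsplits).mp <| by
      rw [aroots, hroots]
      exact Finset.univ.nodup.map hr_inj
  have := isSplittingField_of_splits hsplits
  exact IsGalois.of_separable_splitting_field hsep

theorem Polynomial.Bivariate.irreducible_C_X_mul_add_C_mul_X_pow {K : Type*} [Field K]
    {g : K[X][X]} {n : ℕ} (hg : g.natDegree < n) (hg0 : g.evalEval 0 0 ≠ 0) {c : K}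
    (hc : c ≠ 0) : Irreducible (C X * g + C (C c) * X ^ n) := by
  set f : K[X][X] := C X * g + C (C c) * X ^ n
  have hcoeff : ∀ m, f.coeff m = X * g.coeff m + if m = n then C c else 0 := fun m => by
    simp only [f, coeff_add, coeff_C_mul, coeff_X_pow, mul_ite, mul_one, mul_zero]
  have hlead : f.coeff n = C c := by
    rw [hcoeff, coeff_eq_zero_of_natDegree_lt hg, if_pos rfl, mul_zero, zero_add]
  have hdeg : f.natDegree = n :=
    (natDegree_add_eq_right_of_natDegree_lt <| (natDegree_C_mul_le _ _).trans_lt <| by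
      rwa [natDegree_C_mul_X_pow n _ (C_ne_zero.mpr hc)]).trans
      (natDegree_C_mul_X_pow n _ (C_ne_zero.mpr hc))
  have hn : n ≠ 0 := (Nat.zero_le _).trans_lt hg |>.ne'
  have heis : f.IsEisensteinAt (Ideal.span {X}) := by
    refine ⟨?_, fun {m} hm => ?_, ?_⟩
    · rw [leadingCoeff, hdeg, hlead, Ideal.mem_span_singleton, X_dvd_iff, coeff_C_zero]
      exact hc
    · rw [hdeg] at hm
      rw [hcoeff, if_neg hm.ne, add_zero, Ideal.mem_span_singleton]
      exact dvd_mul_right _ _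
    · rw [hcoeff, if_neg (Ne.symm hn), add_zero, Ideal.span_singleton_pow,
        Ideal.mem_span_singleton, pow_two, mul_dvd_mul_iff_left X_ne_zero, X_dvd_iff]
      simpa [evalEval, ← coeff_zero_eq_eval_zero] using hg0
  have hprim : f.IsPrimitive := fun r hr => isUnit_of_dvd_unit
    ((C_dvd_iff_dvd_coeff _ _).mp hr n) (hlead ▸ isUnit_C.mpr hc.isUnit)
  exact heis.irreducible ((Ideal.span_singleton_prime X_ne_zero).mpr prime_X) hprim
    (hdeg ▸ Nat.pos_of_ne_zero hn)

theorem irreducible_prod_X_add_C_add_C_mul_X_pow {Fq K : Type*} [Field Fq] [Fintype Fq]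
    [Field K] [Algebra Fq K] {c : K} (hc : c ≠ 0) {n : ℕ} (hn : Fintype.card Fq ≤ n) :
    Irreducible ((∏ α : Fq,
        (X + C (algebraMap K (RatFunc K) (algebraMap Fq K α) * RatFunc.X
          + algebraMap K (RatFunc K) (algebraMap Fq K (α ^ 2)))))
      + C (algebraMap K (RatFunc K) c * RatFunc.X ^ n)) := by
  classical
  set A := algebraMap Fq K
  set P : K[X][X] := ∏ α, (X + C (C (A α) * X + C (A (α ^ 2)))) + C (C c * X ^ n)
  suffices hP : Irreducible (P.map (algebraMap K[X] (RatFunc K))) by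
    simpa [P, Polynomial.map_prod, RatFunc.algebraMap_C, RatFunc.algebraMap_eq_C] using hP
  set g : K[X][X] := ∏ α ∈ Finset.univ.erase 0, (C X + C (C (A α)) * X + C (C (A (α ^ 2))))
  have hswap : Bivariate.swap P = C X * g + C (C c) * X ^ n := by
    simp only [P, g, map_add, map_prod, Bivariate.swap_Y, Bivariate.swap_C]
    rw [← Finset.mul_prod_erase _ _ (Finset.mem_univ (0 : Fq))]
    simp [add_assoc]
  rw [← (monic_prod_X_add_C_add_C _ _).irreducible_iff_irreducible_map_fraction_map,
    ← MulEquiv.irreducible_iff Bivariate.swap, hswap]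
  refine Bivariate.irreducible_C_X_mul_add_C_mul_X_pow ?_ ?_ hc
  · have hfactor : ∀ α, (C X + C (C (A α)) * X + C (C (A (α ^ 2))) : K[X][X]).natDegree ≤ 1 :=
      fun α => by compute_degree
    calc g.natDegree ≤ ∑ α ∈ Finset.univ.erase 0, 1 :=
          (natDegree_prod_le _ _).trans (Finset.sum_le_sum fun α _ => hfactor α)
      _ < n := by
        rw [Finset.sum_const, smul_eq_mul, mul_one, Finset.card_erase_of_mem (Finset.mem_univ _),
          Finset.card_univ]
        have := Fintype.card_pos (α := Fq)
        omega
  · simp [g, evalEval_prod, evalEval_C, Finset.prod_ne_zero_iff, A]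

noncomputable def galoisShift (Fq K : Type*) [CommRing Fq] [Field K] [CharP K 2] [Algebra Fq K] :
    Fq →+ RatFunc K where
  toFun α := algebraMap K (RatFunc K) (algebraMap Fq K α) * RatFunc.X
    + algebraMap K (RatFunc K) (algebraMap Fq K (α ^ 2))
  map_zero' := by simp
  map_add' α β := by
    simp only [map_add, map_pow, CharTwo.add_sq]
    ring

theorem galoisShift_injective (Fq K : Type*) [Field Fq] [Field K] [CharP K 2] [Algebra Fq K] :
    Function.Injective (galoisShift Fq K) := by
  refine (injective_iff_map_eq_zero _).mpr fun α hα => ?_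
  by_contra hne
  set y := algebraMap Fq K α
  have hy : algebraMap K (RatFunc K) y ≠ 0 := by simpa [y] using hne
  have hX : RatFunc.X = algebraMap K (RatFunc K) (-y) := by
    refine mul_left_cancel₀ hy ?_
    simp only [galoisShift, AddMonoidHom.coe_mk, ZeroHom.coe_mk, map_pow] at hα
    rw [map_neg]
    linear_combination hα
  exact RatFunc.transcendental_X (hX ▸ isAlgebraic_algebraMap (-y))

theorem inner_Galois_point_of_curve_general (e : ℕ)
    (Fq : Type*) [Field Fq] [Fintype Fq] (hF : Fintype.card Fq = 2 ^ e)
    (K : Type*) [Field K] [CharP K 2] [Algebra Fq K]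
    (c : K) (hc0 : c ≠ 0)
    (φ : Polynomial (RatFunc K))
    (hdef : φ = (∏ α : Fq,
        (X + C (algebraMap K (RatFunc K) (algebraMap Fq K α) * RatFunc.X
          + algebraMap K (RatFunc K) (algebraMap Fq K (α ^ 2)))))
      + C (algebraMap K (RatFunc K) c * RatFunc.X ^ (2 ^ e + 1))) :
    ∃ hφ : Irreducible φ, φ.natDegree = 2 ^ e ∧
      (letI : Fact (Irreducible φ) := ⟨hφ⟩
       IsGalois (RatFunc K) (AdjoinRoot φ)) := by
  have hshift : φ = ∏ α, (X + C (galoisShift Fq K α))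
      + C (algebraMap K (RatFunc K) c * RatFunc.X ^ (2 ^ e + 1)) := hdef
  have hirr : Irreducible φ := by
    rw [hdef]
    exact irreducible_prod_X_add_C_add_C_mul_X_pow hc0 (by omega)
  have hdeg : φ.natDegree = 2 ^ e := by rw [hshift, natDegree_prod_X_add_C_add_C, hF]
  have := Fact.mk hirr
  refine ⟨hirr, hdeg, AdjoinRoot.isGalois_of_comp_X_add_C_eq_self (galoisShift_injective Fq K)
    (fun β => ?_) (by rw [hdeg, hF])⟩
  rw [hshift]
  exact prod_X_add_C_add_C_comp_X_add_C _ _ β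

/-- For `q = 2^e`, an algebraically closed field `K` of characteristic 2
containing `F_q`, and `c ∈ K \ {0,1}`, the polynomial
`φ(X) = ∏_{α ∈ F_q}(X + αt + α²) + c·t^(q+1)` over the rational function
field `K(t)` is irreducible of degree `q`, and `K(t)[X]/(φ)` is a Galois
extension of `K(t)`.  (The point `(1:0:0)` is an inner Galois point of the
curve `∏_{α ∈ F_q}(x + αy + α²) + c·y^(q+1) = 0`.) -/
theorem inner_Galois_point_of_curve (e : ℕ) (he : 2 ≤ e)
    (Fq : Type*) [Field Fq] [Fintype Fq] (hF : Fintype.card Fq = 2 ^ e)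
    (K : Type*) [Field K] [IsAlgClosed K] [CharP K 2] [Algebra Fq K]
    (c : K) (hc0 : c ≠ 0) (hc1 : c ≠ 1)
    (φ : Polynomial (RatFunc K))
    (hdef : φ = (∏ α : Fq,
        (X + C (algebraMap K (RatFunc K) (algebraMap Fq K α) * RatFunc.X
          + algebraMap K (RatFunc K) (algebraMap Fq K (α ^ 2)))))
      + C (algebraMap K (RatFunc K) c * RatFunc.X ^ (2 ^ e + 1))) :
    ∃ hφ : Irreducible φ, φ.natDegree = 2 ^ e ∧
      (letI : Fact (Irreducible φ) := ⟨hφ⟩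
       IsGalois (RatFunc K) (AdjoinRoot φ)) :=
  inner_Galois_point_of_curve_general e Fq hF K c hc0 φ hdef
end
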